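/- Let p₁, p₂, g ∈ 𝔽₂[t]. The submodule L of 𝔽₂[t]⁶ generated by e₁ + e₃ + e₅, e₂ + e₄, and e₄ + e₆ is a Lagrangian for the orthogonal direct sum P_{p₁, g} ⊕ P_{p₂, g} ⊕ P_{p₁+p₂, g}, i.e. for the quadratic form Q(a, b, c, d, u, v) = p₁·a² + a·b + g·b² + p₂·c² + c·d + g·d² + (p₁+p₂)·u² + u·v + g·v²: Q vanishes on L and L = L^⊥ with respect to the polar form of Q. (In particular, in the Witt group one has [P_{p₁,g}] + [P_{p₂,g}] = [P_{p₁+p₂,g}].) -/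
import Mathlib


/-- The polar form `B(u, v) = Q(u+v) − Q(u) − Q(v)` of a quadratic form `Q`. -/
noncomputable def polar {M : Type*} [AddCommGroup M] (Q : M → Polynomial (ZMod 2))
    (u v : M) : Polynomial (ZMod 2) :=
  Q (u + v) - Q u - Q v

/-- The orthogonal sum `P_{p₁,g} ⊕ P_{p₂,g} ⊕ P_{p₁+p₂,g}` as a quadratic form on
`𝔽₂[t]⁶`. -/
noncomputable def Qsum6 (p₁ p₂ g : Polynomial (ZMod 2))
    (v : Fin 6 → Polynomial (ZMod 2)) : Polynomial (ZMod 2) :=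
  p₁ * (v 0) ^ 2 + v 0 * v 1 + g * (v 1) ^ 2 +
    p₂ * (v 2) ^ 2 + v 2 * v 3 + g * (v 3) ^ 2 +
    (p₁ + p₂) * (v 4) ^ 2 + v 4 * v 5 + g * (v 5) ^ 2

/-- The submodule of `𝔽₂[t]⁶` generated by `e₁+e₃+e₅`, `e₂+e₄` and `e₄+e₆`. -/
noncomputable def L6 : Submodule (Polynomial (ZMod 2)) (Fin 6 → Polynomial (ZMod 2)) :=
  Submodule.span (Polynomial (ZMod 2))
    {![1, 0, 1, 0, 1, 0], ![0, 1, 0, 1, 0, 0], ![0, 0, 0, 1, 0, 1]}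

lemma two_eq_zero' : (2 : Polynomial (ZMod 2)) = 0 := by
  have : ((2:ℕ) : Polynomial (ZMod 2)) = 0 := CharP.cast_eq_zero _ 2
  exact_mod_cast this

lemma mem_L6_iff {v : Fin 6 → Polynomial (ZMod 2)} :
    v ∈ L6 ↔ v 2 = v 0 ∧ v 4 = v 0 ∧ v 3 = v 1 + v 5 := by
  constructor
  · intro hv
    induction hv using Submodule.span_induction with
    | mem x hx =>
      simp only [Set.mem_insert_iff, Set.mem_singleton_iff] at hx
      rcases hx with h | h | h <;> subst h <;>
        refine ⟨?_, ?_, ?_⟩ <;>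
        simp [show (5:Fin 6) = Fin.succ 4 from rfl, Matrix.cons_val_succ]
    | zero => simp
    | add x y hx hy ihx ihy =>
      obtain ⟨a1, a2, a3⟩ := ihx
      obtain ⟨b1, b2, b3⟩ := ihy
      refine ⟨?_, ?_, ?_⟩ <;> simp only [Pi.add_apply, a1, a2, a3, b1, b2, b3] <;> ring
    | smul a x hx ih =>
      obtain ⟨a1, a2, a3⟩ := ih
      refine ⟨?_, ?_, ?_⟩ <;>
        simp only [Pi.smul_apply, smul_eq_mul, a1, a2, a3] <;> ring
  · rintro ⟨h2, h4, h3⟩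
    have hv : v = v 0 • ![1, 0, 1, 0, 1, 0] + v 1 • ![0, 1, 0, 1, 0, 0] +
        v 5 • ![0, 0, 0, 1, 0, 1] := by
      funext i
      fin_cases i <;>
        simp [show (5:Fin 6) = Fin.succ 4 from rfl, Matrix.cons_val_succ, h2, h4, h3]
    rw [hv]
    refine Submodule.add_mem _ (Submodule.add_mem _ ?_ ?_) ?_ <;>
      exact Submodule.smul_mem _ _ (Submodule.subset_span (by simp))

theorem lagrangian_sum_formula (p₁ p₂ g : Polynomial (ZMod 2)) :
    (∀ v ∈ L6, Qsum6 p₁ p₂ g v = 0) ∧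
    ((L6 : Set (Fin 6 → Polynomial (ZMod 2))) =
      {v | ∀ l ∈ L6, polar (Qsum6 p₁ p₂ g) v l = 0}) := by
  have h2 := two_eq_zero'
  have key : ∀ v ∈ L6, Qsum6 p₁ p₂ g v = 0 := by
    intro v hv
    rw [mem_L6_iff] at hv
    obtain ⟨e2, e4, e3⟩ := hv
    unfold Qsum6
    rw [e2, e4, e3]
    linear_combination ((v 0)*(v 5) + (v 0)*(v 1) + g*(v 5)^2 + g*(v 1)*(v 5) + g*(v 1)^2
      + p₂*(v 0)^2 + p₁*(v 0)^2) * h2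
  refine ⟨key, ?_⟩
  ext v
  simp only [SetLike.mem_coe, Set.mem_setOf_eq]
  constructor
  · intro hv l hl
    have hv' := mem_L6_iff.mp hv
    have hl' := mem_L6_iff.mp hl
    obtain ⟨e2, e4, e3⟩ := hv'
    obtain ⟨f2, f4, f3⟩ := hl'
    unfold polar Qsum6
    simp only [Pi.add_apply]
    rw [e2, e4, e3, f2, f4, f3]
    linear_combination ((v 5)*(l 0) + (v 1)*(l 0) + (v 0)*(l 5) + (v 0)*(l 1)
      + 2*g*(v 5)*(l 5) + g*(v 5)*(l 1) + g*(v 1)*(l 5) + 2*g*(v 1)*(l 1)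
      + 2*p₂*(v 0)*(l 0) + 2*p₁*(v 0)*(l 0)) * h2
  · intro h
    have m1 : (![1, 0, 1, 0, 1, 0] : Fin 6 → Polynomial (ZMod 2)) ∈ L6 :=
      Submodule.subset_span (by simp)
    have m2 : (![0, 1, 0, 1, 0, 0] : Fin 6 → Polynomial (ZMod 2)) ∈ L6 :=
      Submodule.subset_span (by simp)
    have m3 : (![0, 0, 0, 1, 0, 1] : Fin 6 → Polynomial (ZMod 2)) ∈ L6 :=
      Submodule.subset_span (by simp)
    have P1 := h _ m1
    have P2 := h _ m2
    have P3 := h _ m3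
    unfold polar Qsum6 at P1 P2 P3
    simp only [Pi.add_apply, show (5:Fin 6) = Fin.succ 4 from rfl, Matrix.cons_val_succ,
      Matrix.cons_val_zero, Matrix.cons_val_one, Matrix.head_cons, Matrix.cons_val_two,
      Matrix.cons_val_three, Matrix.cons_val_four, Matrix.tail_cons] at P1 P2 P3
    simp only [show (Fin.succ 4 : Fin 6) = 5 from rfl] at P1 P2 P3
    rw [mem_L6_iff]
    refine ⟨?_, ?_, ?_⟩
    · linear_combination P2 + (-(v 0) - g*(v 3) - g*(v 1)) * h2
    · linear_combination P2 + P3 + (-(v 2) - (v 0) - g*(v 5) - 2*g*(v 3) - g*(v 1)) * h2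
    · linear_combination P1 + (-(v 5) - (v 1) - p₂*(v 4) - p₂*(v 2) - p₁*(v 4) - p₁*(v 0)) * h2
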